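/- Let O₁, …, O_l be rank-1 orthogonal projectors on a finite-dimensional complex Hilbert space ℂ^d, and let cos φ = max_{i≠j} ‖O_i O_j‖ (operator norm). Then ‖O₁ + ⋯ + O_l‖ ≤ 1 + (l−1)·cos φ. -/

import Mathlib

/-!
Write `O i = rankOne (v i) (v i)` with unit vectors `v i`; then `‖O i * O j‖ = ‖⟪v i, v j⟫‖` and
`A = ∑ i, O i` has quadratic form `⟪x, A x⟫ = ∑ i, ‖⟪v i, x⟫‖²`. The Gram matrix of the `v i` is
dominated entrywise by `c • J + (1 - c) • I` with `c = cos φ`, so Cauchy–Schwarz gives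
`‖A x‖² ≤ (1 + (l - 1) c) ⟪x, A x⟫ ≤ (1 + (l - 1) c) ‖x‖ ‖A x‖`.
-/

open scoped InnerProductSpace ComplexConjugate
open InnerProductSpace RCLike

variable {𝕜 E : Type*} [RCLike 𝕜] [NormedAddCommGroup E] [InnerProductSpace 𝕜 E]

theorem IsStarProjection.exists_eq_rankOne_self [CompleteSpace E] {p : E →L[𝕜] E}
    (hp : IsStarProjection p) (hrank : Module.finrank 𝕜 p.range = 1) :
    ∃ u : E, ‖u‖ = 1 ∧ p = rankOne 𝕜 u u := by
  obtain ⟨w, hw, hw0⟩ :=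
    p.range.ne_bot_iff.mp (Submodule.isAtom_iff_finrank_eq_one.mpr hrank).ne_bot
  set u := (‖w‖⁻¹ : 𝕜) • w
  have hu : ‖u‖ = 1 := norm_smul_inv_norm hw0
  have hrange : p.range = 𝕜 ∙ u :=
    eq_span_singleton_of_mem_of_finrank_eq_one hrank (p.range.smul_mem _ hw)
      (norm_ne_zero_iff.mp (by simp [hu]))
  obtain ⟨_, hp_eq⟩ := isStarProjection_iff_eq_starProjection_range.mp hp
  refine ⟨u, hu, ContinuousLinearMap.ext fun x => ?_⟩
  rw [hp_eq]
  simp only [hrange, Submodule.starProjection_unit_singleton 𝕜 hu, rankOne_apply]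

theorem norm_rankOne_self_mul_rankOne_self {u v : E} (hu : ‖u‖ = 1) (hv : ‖v‖ = 1) :
    ‖rankOne 𝕜 u u * rankOne 𝕜 v v‖ = ‖⟪u, v⟫_𝕜‖ := by
  rw [ContinuousLinearMap.mul_def, rankOne_comp_rankOne, norm_smul, norm_rankOne, hu, hv,
    mul_one, mul_one]

theorem ContinuousLinearMap.opNorm_le_of_norm_apply_sq_le {T : E →L[𝕜] E} {C : ℝ} (hC : 0 ≤ C)
    (h : ∀ x, ‖T x‖ ^ 2 ≤ C * re ⟪x, T x⟫_𝕜) : ‖T‖ ≤ C := by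
  refine T.opNorm_le_bound hC fun x => ?_
  have key : ‖T x‖ * ‖T x‖ ≤ C * ‖x‖ * ‖T x‖ := calc
    ‖T x‖ * ‖T x‖ = ‖T x‖ ^ 2 := (sq _).symm
    _ ≤ C * re ⟪x, T x⟫_𝕜 := h x
    _ ≤ C * (‖x‖ * ‖T x‖) := mul_le_mul_of_nonneg_left (re_inner_le_norm x (T x)) hC
    _ = C * ‖x‖ * ‖T x‖ := (mul_assoc _ _ _).symm
  rcases (norm_nonneg (T x)).eq_or_lt with h0 | hpos
  · rw [← h0]; positivity
  · exact le_of_mul_le_mul_right key hpos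

theorem norm_sum_smul_sq_le {ι : Type*} [Fintype ι] {v : ι → E} {c : ℝ} (hc : 0 ≤ c)
    (hv : ∀ i, ‖v i‖ ≤ 1) (hvv : Pairwise fun i j => ‖⟪v i, v j⟫_𝕜‖ ≤ c) (a : ι → 𝕜) :
    ‖∑ i, a i • v i‖ ^ 2 ≤ (1 + (Fintype.card ι - 1) * c) * ∑ i, ‖a i‖ ^ 2 := by
  classical
  have hgram : ∀ i j, ‖⟪v i, v j⟫_𝕜‖ ≤ c + if i = j then 1 - c else 0 := by
    intro i j
    split_ifs with hij
    · subst hij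
      rw [inner_self_eq_norm_sq_to_K, norm_pow, norm_algebraMap', norm_norm, add_sub_cancel]
      exact pow_le_one₀ (norm_nonneg _) (hv i)
    · simpa using hvv hij
  calc ‖∑ i, a i • v i‖ ^ 2
      = re (∑ i, ∑ j, conj (a i) * a j * ⟪v i, v j⟫_𝕜) := by
        rw [← inner_self_eq_norm_sq (𝕜 := 𝕜), sum_inner]
        congr 1
        refine Finset.sum_congr rfl fun i _ => ?_
        rw [inner_smul_left, inner_sum, Finset.mul_sum]
        refine Finset.sum_congr rfl fun j _ => ?_
        rw [inner_smul_right, mul_assoc]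
    _ ≤ ∑ i, ∑ j, ‖⟪v i, v j⟫_𝕜‖ * (‖a i‖ * ‖a j‖) := by
        refine (re_le_norm _).trans ((norm_sum_le _ _).trans (Finset.sum_le_sum fun i _ => ?_))
        refine (norm_sum_le _ _).trans_eq (Finset.sum_congr rfl fun j _ => ?_)
        rw [norm_mul, norm_mul, RCLike.norm_conj, mul_comm]
    _ ≤ ∑ i, ∑ j, (c + if i = j then 1 - c else 0) * (‖a i‖ * ‖a j‖) := by
        gcongr with i _ j _
        exact hgram i j
    _ = c * (∑ i, ‖a i‖) ^ 2 + (1 - c) * ∑ i, ‖a i‖ ^ 2 := by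
        rw [sq, Finset.sum_mul_sum, Finset.mul_sum, Finset.mul_sum, ← Finset.sum_add_distrib]
        refine Finset.sum_congr rfl fun i _ => ?_
        simp only [add_mul, Finset.sum_add_distrib, ← Finset.mul_sum, ite_mul, zero_mul,
          Finset.sum_ite_eq, Finset.mem_univ, if_true]
        ring
    _ ≤ c * (Fintype.card ι * ∑ i, ‖a i‖ ^ 2) + (1 - c) * ∑ i, ‖a i‖ ^ 2 := by
        gcongr
        exact sq_sum_le_card_mul_sum_sq
    _ = (1 + (Fintype.card ι - 1) * c) * ∑ i, ‖a i‖ ^ 2 := by ring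

theorem norm_sum_rankOne_self_le {ι : Type*} [Fintype ι] [Nonempty ι] {v : ι → E} {c : ℝ}
    (hc : 0 ≤ c) (hv : ∀ i, ‖v i‖ ≤ 1) (hvv : Pairwise fun i j => ‖⟪v i, v j⟫_𝕜‖ ≤ c) :
    ‖∑ i, rankOne 𝕜 (v i) (v i)‖ ≤ 1 + (Fintype.card ι - 1) * c := by
  have hcard : (1 : ℝ) ≤ Fintype.card ι := by exact_mod_cast Fintype.card_pos
  refine ContinuousLinearMap.opNorm_le_of_norm_apply_sq_le
    (add_nonneg zero_le_one (mul_nonneg (sub_nonneg.mpr hcard) hc)) fun x => ?_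
  have hquad : re ⟪x, (∑ i, rankOne 𝕜 (v i) (v i)) x⟫_𝕜 = ∑ i, ‖⟪v i, x⟫_𝕜‖ ^ 2 := by
    rw [sum_apply, inner_sum, map_sum]
    refine Finset.sum_congr rfl fun i _ => ?_
    rw [rankOne_apply, inner_smul_right, inner_mul_symm_re_eq_norm, norm_mul, norm_inner_symm, sq]
  rw [hquad, sum_apply]
  exact norm_sum_smul_sq_le hc hv hvv _

/-- For rank-1 orthogonal projectors `O₁, …, O_l` on `ℂ^d`, with
`cos φ = max_{i ≠ j} ‖O_i O_j‖`, one has `‖O₁ + ⋯ + O_l‖ ≤ 1 + (l-1) cos φ`. -/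
theorem sum_rank_one_projectors_norm_le
    {d l : ℕ} (hl : 2 ≤ l)
    (O : Fin l → EuclideanSpace ℂ (Fin d) →L[ℂ] EuclideanSpace ℂ (Fin d))
    (hidem : ∀ i, O i * O i = O i)
    (hsa : ∀ i, ContinuousLinearMap.adjoint (O i) = O i)
    (hrank : ∀ i, Module.finrank ℂ (LinearMap.range ((O i) : EuclideanSpace ℂ (Fin d) →ₗ[ℂ] EuclideanSpace ℂ (Fin d))) = 1)
    (cosφ : ℝ)
    (hcos : cosφ = (Finset.univ.offDiag).sup'
      (⟨(⟨0, by omega⟩, ⟨1, by omega⟩), by simp [Finset.mem_offDiag, Fin.ext_iff]⟩)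
      (fun p : Fin l × Fin l => ‖O p.1 * O p.2‖)) :
    ‖∑ i, O i‖ ≤ 1 + ((l : ℝ) - 1) * cosφ := by
  choose v hv_norm hv using fun i => IsStarProjection.exists_eq_rankOne_self
    ⟨hidem i, ContinuousLinearMap.isSelfAdjoint_iff'.mpr (hsa i)⟩ (hrank i)
  have hinner : Pairwise fun i j => ‖⟪v i, v j⟫_ℂ‖ ≤ cosφ := fun i j hij => by
    show ‖⟪v i, v j⟫_ℂ‖ ≤ cosφ
    rw [← norm_rankOne_self_mul_rankOne_self (hv_norm i) (hv_norm j), ← hv i, ← hv j, hcos]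
    have hmem : (i, j) ∈ (Finset.univ : Finset (Fin l)).offDiag := by simpa using hij
    exact Finset.le_sup' (fun p : Fin l × Fin l => ‖O p.1 * O p.2‖) hmem
  have hcos_nonneg : 0 ≤ cosφ :=
    (norm_nonneg _).trans (hinner (i := ⟨0, by omega⟩) (j := ⟨1, by omega⟩) (by simp))
  have : Nonempty (Fin l) := ⟨⟨0, by omega⟩⟩
  simpa only [← hv, Fintype.card_fin] using
    norm_sum_rankOne_self_le hcos_nonneg (fun i => (hv_norm i).le) hinner
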